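/- arXiv:1402.7313 — 2 statements merged into one kernel-verified Lean document; each statement's English description precedes it below -/
import Mathlib

section
/- Let 0<λ<1, d=2, let A:ℝ→ℝ be Lipschitz and 1-periodic, and let b be the λ-calibrated subaction for A. Let 𝒯 be the set of turning points and Λ=∪_{n≥0} T^n(𝒯). If Λ is a finite set, then the graph of b is a union of finitely many leaves: there exists a finite set F⊆Σ such that for every x∈[0,1] there is a∈F with b(x)=S(x,a). -/
/-!
Follow the maximizing inverse branch from `x`: the calibration identity telescopes along this
greedy orbit, so `b x = S(x, a)` for the greedy code `a` of `x`. On an interval of `[0,1) \ Λ`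
the greedy digit cannot change, since by the intermediate value theorem a change would produce a
turning point; and because `Λ` is `T`-invariant, the chosen inverse branch maps such an interval
into another one. Hence the greedy code is constant on each of the finitely many components of
`[0,1) \ Λ`, and only finitely many codes occur.
-/

open Set

noncomputable section

/-- Inverse branch `τ_i(x) = (x+i)/d` of `T(x) = dx (mod 1)`. -/
def tau (d i : ℕ) (x : ℝ) : ℝ := (x + i) / d

/-- Iterated inverse branches: `tpath d a x k = (τ_{a_k} ∘ ⋯ ∘ τ_{a_0})(x)`. -/
def tpath (d : ℕ) (a : ℕ → ℕ) (x : ℝ) : ℕ → ℝ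
  | 0 => tau d (a 0) x
  | k + 1 => tau d (a (k + 1)) (tpath d a x k)

/-- `S(x,a) = Σ_{k≥0} λ^k A(τ_{k,a} x)`. -/
def Sfun (lam : ℝ) (d : ℕ) (A : ℝ → ℝ) (x : ℝ) (a : ℕ → ℕ) : ℝ :=
  ∑' k : ℕ, lam ^ k * A (tpath d a x k)

/-- The left shift `σ` on sequences. -/
def shift (a : ℕ → ℕ) : ℕ → ℕ := fun n => a (n + 1)

/-- Strict lexicographic order on sequences. -/
def lexLt (a b : ℕ → ℕ) : Prop := ∃ n, (∀ i < n, a i = b i) ∧ a n < b n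

/-- `T(x) = dx (mod 1)`. -/
def Tmap (d : ℕ) (x : ℝ) : ℝ := Int.fract (d * x)

/-- A λ-calibrated subaction for `A`: continuous on `[0,1]`, `b 0 = b 1`, and
`b(x) = max_{i<d} (λ b(τ_i x) + A(τ_i x))` for all `x ∈ [0,1]`. -/
def IsCalibrated (lam : ℝ) (d : ℕ) (A b : ℝ → ℝ) : Prop :=
  ContinuousOn b (Icc 0 1) ∧ b 0 = b 1 ∧
    ∀ x ∈ Icc (0:ℝ) 1,
      IsGreatest {y : ℝ | ∃ i < d, y = lam * b (tau d i x) + A (tau d i x)} (b x)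

/-- The twist condition: for `a < b` lexicographically and `x ∈ (0,1)`,
`∂S/∂x(x,a) − ∂S/∂x(x,b) > 0`. -/
def Twist (lam : ℝ) (d : ℕ) (A : ℝ → ℝ) : Prop :=
  ∀ a b : ℕ → ℕ, (∀ k, a k < d) → (∀ k, b k < d) → lexLt a b →
    ∀ x ∈ Ioo (0:ℝ) 1,
      0 < deriv (fun y => Sfun lam d A y a) x - deriv (fun y => Sfun lam d A y b) x

/-- `Z(a) = Σ_k (λ/2)^k a_k`. -/
def Zfun (lam : ℝ) (a : ℕ → ℕ) : ℝ := ∑' k : ℕ, (lam / 2) ^ k * a k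

/-- `ψ_k(a) = Σ_{j=0}^{k} a_j 2^{j−k−1}`. -/
def psi (a : ℕ → ℕ) (k : ℕ) : ℝ :=
  ∑ j ∈ Finset.range (k + 1), (a j : ℝ) * (2 : ℝ) ^ ((j : ℤ) - k - 1)

/-- Concatenation `i * c`. -/
def cons (i : ℕ) (c : ℕ → ℕ) : ℕ → ℕ
  | 0 => i
  | n + 1 => c n

/-- The periodic sequence `(10)^∞ = (1,0,1,0,…)`. -/
def seq10 : ℕ → ℕ := fun n => if n % 2 = 0 then 1 else 0

/-- The periodic sequence `(01)^∞ = (0,1,0,1,…)`. -/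
def seq01 : ℕ → ℕ := fun n => n % 2

/-- The periodic sequence `(110)^∞`. -/
def seq110 : ℕ → ℕ := fun n => if n % 3 = 2 then 0 else 1

/-- The periodic sequence `(101)^∞`. -/
def seq101 : ℕ → ℕ := fun n => if n % 3 = 1 then 0 else 1

/-- The periodic sequence `(011)^∞`. -/
def seq011 : ℕ → ℕ := fun n => if n % 3 = 0 then 0 else 1

open Filter Topology

lemma tau_mem_Icc {d i : ℕ} (hi : i < d) {x : ℝ} (hx : x ∈ Icc (0 : ℝ) 1) :
    tau d i x ∈ Icc (0 : ℝ) 1 := by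
  have hd : (0 : ℝ) < d := by exact_mod_cast (Nat.zero_le i).trans_lt hi
  have hid : (i : ℝ) + 1 ≤ d := by exact_mod_cast hi
  exact ⟨div_nonneg (by linarith [hx.1]) hd.le, by rw [tau, div_le_one hd]; linarith [hx.2]⟩

lemma tau_mem_Ico {d i : ℕ} (hi : i < d) {x : ℝ} (hx : x ∈ Ico (0 : ℝ) 1) :
    tau d i x ∈ Ico (0 : ℝ) 1 := by
  have hd : (0 : ℝ) < d := by exact_mod_cast (Nat.zero_le i).trans_lt hi
  have hid : (i : ℝ) + 1 ≤ d := by exact_mod_cast hi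
  exact ⟨(tau_mem_Icc hi (Ico_subset_Icc_self hx)).1, by rw [tau, div_lt_one hd]; linarith [hx.2]⟩

lemma Tmap_tau {d i : ℕ} (hd : d ≠ 0) {x : ℝ} (hx : x ∈ Ico (0 : ℝ) 1) :
    Tmap d (tau d i x) = x := by
  rw [Tmap, tau, mul_div_cancel₀ _ (Nat.cast_ne_zero.2 hd), Int.fract_add_natCast,
    Int.fract_eq_self.2 hx]

lemma image_tau_uIcc (d i : ℕ) (x y : ℝ) : tau d i '' uIcc x y = uIcc (tau d i x) (tau d i y) := by
  have : tau d i = (fun z : ℝ => z / d) ∘ (fun z : ℝ => z + i) := rfl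
  rw [this, image_comp, image_add_const_uIcc, image_div_const_uIcc]
  rfl

lemma tau_uIcc_subset {d i : ℕ} (hi : i < d) {Λ : Set ℝ} (hΛ : MapsTo (Tmap d) Λ Λ) {x y : ℝ}
    (h : uIcc x y ⊆ Ico 0 1 \ Λ) : uIcc (tau d i x) (tau d i y) ⊆ Ico 0 1 \ Λ := by
  rw [← image_tau_uIcc]
  rintro _ ⟨z, hz, rfl⟩
  obtain ⟨hz01, hzΛ⟩ := h hz
  refine ⟨tau_mem_Ico hi hz01, fun hτ => hzΛ ?_⟩
  simpa only [Tmap_tau (Nat.ne_zero_of_lt hi) hz01] using hΛ hτ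

lemma finite_image_diff_of_uIcc_subset {α β : Type*} [LinearOrder α] {C E : Set α}
    (hC : C.OrdConnected) (hE : E.Finite) {g : α → β}
    (hg : ∀ x y, uIcc x y ⊆ C \ E → g x = g y) : (g '' (C \ E)).Finite := by
  set above : α → Set α := fun x => {p ∈ E | x < p}
  have hIcc : ∀ x ∈ C \ E, ∀ y ∈ C \ E, above x = above y → x ≤ y → Icc x y ⊆ C \ E := by
    intro x hx y hy hxy hle z hz
    refine ⟨hC.out hx.1 hy.1 hz, fun hzE => ?_⟩
    have hxz : x < z := hz.1.lt_of_ne (by rintro rfl; exact hx.2 hzE)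
    have : z ∈ above y := hxy ▸ (⟨hzE, hxz⟩ : z ∈ above x)
    exact absurd hz.2 (not_le.2 this.2)
  have huIcc : ∀ x ∈ C \ E, ∀ y ∈ C \ E, above x = above y → uIcc x y ⊆ C \ E := by
    intro x hx y hy hxy
    rcases le_total x y with hle | hle
    · rw [uIcc_of_le hle]; exact hIcc x hx y hy hxy hle
    · rw [uIcc_of_ge hle]; exact hIcc y hy x hx hxy.symm hle
  have habove : (above '' (C \ E)).Finite :=
    hE.finite_subsets.subset (by rintro _ ⟨x, -, rfl⟩ p hp; exact hp.1)
  refine (habove.biUnion fun s _ => Subsingleton.finite (s := g '' {x ∈ C \ E | above x = s})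
    ?_).subset ?_
  · rintro _ ⟨x, ⟨hx, rfl⟩, rfl⟩ _ ⟨y, ⟨hy, hxy⟩, rfl⟩
    exact hg x y (huIcc x hx y hy hxy.symm)
  · rintro _ ⟨x, hx, rfl⟩
    exact mem_biUnion (mem_image_of_mem above hx) (mem_image_of_mem g ⟨hx, rfl⟩)

section Greedy

variable (lam : ℝ) (A b : ℝ → ℝ)

def branchValue (i : ℕ) (x : ℝ) : ℝ := lam * b (tau 2 i x) + A (tau 2 i x)

def greedyDigit (x : ℝ) : ℕ :=
  if branchValue lam A b 0 x ≤ branchValue lam A b 1 x then 1 else 0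

def greedyOrbit (x : ℝ) : ℕ → ℝ
  | 0 => x
  | k + 1 => tau 2 (greedyDigit lam A b (greedyOrbit x k)) (greedyOrbit x k)

def greedyCode (x : ℝ) : ℕ → ℕ := fun k => greedyDigit lam A b (greedyOrbit lam A b x k)

def turningSet : Set ℝ := {z ∈ Icc 0 1 | branchValue lam A b 0 z = branchValue lam A b 1 z}

variable {lam A b}

lemma greedyDigit_lt_two (x : ℝ) : greedyDigit lam A b x < 2 := by
  unfold greedyDigit; split_ifs <;> norm_num

lemma greedyOrbit_mem_Icc {x : ℝ} (hx : x ∈ Icc (0 : ℝ) 1) (k : ℕ) :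
    greedyOrbit lam A b x k ∈ Icc (0 : ℝ) 1 := by
  induction k with
  | zero => exact hx
  | succ k ih => exact tau_mem_Icc (greedyDigit_lt_two _) ih

lemma tpath_greedyCode (x : ℝ) (k : ℕ) :
    tpath 2 (greedyCode lam A b x) x k = greedyOrbit lam A b x (k + 1) := by
  induction k with
  | zero => rfl
  | succ k ih => rw [tpath, ih]; rfl

namespace IsCalibrated

lemma eq_max_branchValue (hb : IsCalibrated lam 2 A b) {x : ℝ} (hx : x ∈ Icc (0 : ℝ) 1) :
    b x = max (branchValue lam A b 0 x) (branchValue lam A b 1 x) := by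
  refine (hb.2.2 x hx).unique ?_
  convert isGreatest_pair using 1
  ext y
  constructor
  · rintro ⟨i, hi, rfl⟩
    interval_cases i <;> simp [branchValue]
  · rintro (rfl | rfl)
    exacts [⟨0, by norm_num, rfl⟩, ⟨1, by norm_num, rfl⟩]

lemma eq_branchValue_greedyDigit (hb : IsCalibrated lam 2 A b) {x : ℝ}
    (hx : x ∈ Icc (0 : ℝ) 1) :
    b x = branchValue lam A b (greedyDigit lam A b x) x := by
  rw [hb.eq_max_branchValue hx, greedyDigit]
  split_ifs with h
  exacts [max_eq_right h, max_eq_left (le_of_not_ge h)]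

lemma eq_sum_add_pow_mul (hb : IsCalibrated lam 2 A b) {x : ℝ} (hx : x ∈ Icc (0 : ℝ) 1)
    (n : ℕ) :
    b x = ∑ k ∈ Finset.range n, lam ^ k * A (greedyOrbit lam A b x (k + 1))
      + lam ^ n * b (greedyOrbit lam A b x n) := by
  induction n with
  | zero => simp [greedyOrbit]
  | succ n ih =>
    rw [ih, hb.eq_branchValue_greedyDigit (greedyOrbit_mem_Icc hx n), Finset.sum_range_succ]
    simp only [branchValue, greedyOrbit]
    ring

lemma hasSum_greedyCode (hb : IsCalibrated lam 2 A b) (hlam0 : 0 < lam) (hlam1 : lam < 1)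
    (hA : ContinuousOn A (Icc 0 1)) {x : ℝ} (hx : x ∈ Icc (0 : ℝ) 1) :
    HasSum (fun k => lam ^ k * A (tpath 2 (greedyCode lam A b x) x k)) (b x) := by
  obtain ⟨Mb, hMb⟩ := isCompact_Icc.exists_bound_of_continuousOn hb.1
  obtain ⟨MA, hMA⟩ := isCompact_Icc.exists_bound_of_continuousOn hA
  have hgeom := summable_geometric_of_lt_one hlam0.le hlam1
  have hsummable : Summable fun k => lam ^ k * A (tpath 2 (greedyCode lam A b x) x k) := by
    refine Summable.of_norm_bounded (hgeom.mul_right MA) fun k => ?_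
    rw [norm_mul, norm_pow, Real.norm_of_nonneg hlam0.le, tpath_greedyCode]
    exact mul_le_mul_of_nonneg_left (hMA _ (greedyOrbit_mem_Icc hx _)) (pow_nonneg hlam0.le k)
  have hremainder : Tendsto (fun n => lam ^ n * b (greedyOrbit lam A b x n)) atTop (𝓝 0) := by
    refine squeeze_zero_norm (fun n => ?_)
      (by simpa using (tendsto_pow_atTop_nhds_zero_of_lt_one hlam0.le hlam1).mul_const Mb)
    rw [norm_mul, norm_pow, Real.norm_of_nonneg hlam0.le]
    exact mul_le_mul_of_nonneg_left (hMb _ (greedyOrbit_mem_Icc hx n)) (pow_nonneg hlam0.le n)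
  have hpartial : ∀ n, ∑ k ∈ Finset.range n, lam ^ k * A (tpath 2 (greedyCode lam A b x) x k)
      = b x - lam ^ n * b (greedyOrbit lam A b x n) := fun n => by
    simp only [tpath_greedyCode]; linarith [hb.eq_sum_add_pow_mul hx n]
  refine hsummable.hasSum_iff_tendsto_nat.2 ?_
  simpa only [hpartial, sub_zero] using tendsto_const_nhds (x := b x).sub hremainder

/-- By the intermediate value theorem, the sign of `branchValue 1 - branchValue 0` only changes
at a turning point. -/
lemma greedyDigit_eq_of_uIcc (hb : IsCalibrated lam 2 A b) (hA : ContinuousOn A (Icc 0 1))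
    {Λ : Set ℝ} (hturn : turningSet lam A b ⊆ Λ)
    {x y : ℝ} (h : uIcc x y ⊆ Ico 0 1 \ Λ) : greedyDigit lam A b x = greedyDigit lam A b y := by
  have hcont : ContinuousOn (fun z => branchValue lam A b 1 z - branchValue lam A b 0 z)
      (Icc 0 1) := by
    have hbranch : ∀ i < 2, ContinuousOn (branchValue lam A b i) (Icc 0 1) := fun i hi =>
      have hτ : Continuous (tau 2 i) := by unfold tau; fun_prop
      (continuousOn_const.mul (hb.1.comp hτ.continuousOn fun _ => tau_mem_Icc hi)).add
        (hA.comp hτ.continuousOn fun _ => tau_mem_Icc hi)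
    exact (hbranch 1 (by norm_num)).sub (hbranch 0 (by norm_num))
  have hsub : uIcc x y ⊆ Icc 0 1 := h.trans (sdiff_subset.trans Ico_subset_Icc_self)
  have hzero : (0 : ℝ) ∉ uIcc (branchValue lam A b 1 x - branchValue lam A b 0 x)
      (branchValue lam A b 1 y - branchValue lam A b 0 y) := fun h0 => by
    obtain ⟨z, hz, hz0⟩ := intermediate_value_uIcc (hcont.mono hsub) h0
    exact (h hz).2 (hturn ⟨hsub hz, (sub_eq_zero.1 hz0).symm⟩)
  unfold greedyDigit
  split_ifs with hx hy hy
  · rfl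
  · exact absurd (mem_uIcc.2 (Or.inr ⟨by linarith, by linarith⟩)) hzero
  · exact absurd (mem_uIcc.2 (Or.inl ⟨by linarith, by linarith⟩)) hzero
  · rfl

lemma greedyOrbit_uIcc_subset (hb : IsCalibrated lam 2 A b) (hA : ContinuousOn A (Icc 0 1))
    {Λ : Set ℝ} (hΛ : MapsTo (Tmap 2) Λ Λ) (hturn : turningSet lam A b ⊆ Λ)
    {x y : ℝ} (h : uIcc x y ⊆ Ico 0 1 \ Λ) (k : ℕ) :
    uIcc (greedyOrbit lam A b x k) (greedyOrbit lam A b y k) ⊆ Ico 0 1 \ Λ := by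
  induction k with
  | zero => exact h
  | succ k ih =>
    simp only [greedyOrbit, ← hb.greedyDigit_eq_of_uIcc hA hturn ih]
    exact tau_uIcc_subset (greedyDigit_lt_two _) hΛ ih

lemma greedyCode_eq_of_uIcc (hb : IsCalibrated lam 2 A b) (hA : ContinuousOn A (Icc 0 1))
    {Λ : Set ℝ} (hΛ : MapsTo (Tmap 2) Λ Λ) (hturn : turningSet lam A b ⊆ Λ)
    {x y : ℝ} (h : uIcc x y ⊆ Ico 0 1 \ Λ) : greedyCode lam A b x = greedyCode lam A b y :=
  funext fun k => hb.greedyDigit_eq_of_uIcc hA hturn (hb.greedyOrbit_uIcc_subset hA hΛ hturn h k)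

end IsCalibrated

end Greedy

theorem stmt10_general (lam : ℝ) (hlam0 : 0 < lam) (hlam1 : lam < 1)
    (A : ℝ → ℝ) (K : NNReal) (hLip : LipschitzWith K A)
    (b : ℝ → ℝ) (hb : IsCalibrated lam 2 A b)
    (Turn : Set ℝ)
    (hTurn : Turn = {x | x ∈ Icc (0:ℝ) 1 ∧
      b x = lam * b (tau 2 0 x) + A (tau 2 0 x) ∧
      b x = lam * b (tau 2 1 x) + A (tau 2 1 x)})
    (Lam : Set ℝ) (hLam : Lam = ⋃ n : ℕ, (Tmap 2)^[n] '' Turn)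
    (hfin : Lam.Finite) :
    ∃ F : Set (ℕ → ℕ), F.Finite ∧ (∀ a ∈ F, ∀ k, a k < 2) ∧
      ∀ x ∈ Icc (0:ℝ) 1, ∃ a ∈ F, b x = Sfun lam 2 A x a := by
  have hA : ContinuousOn A (Icc 0 1) := hLip.continuous.continuousOn
  have hΛ : MapsTo (Tmap 2) Lam Lam := by
    intro z hz
    obtain ⟨n, y, hy, rfl⟩ := mem_iUnion.1 (hLam ▸ hz)
    exact hLam ▸ mem_iUnion.2 ⟨n + 1, y, hy, Function.iterate_succ_apply' _ _ _⟩
  have hturn : turningSet lam A b ⊆ Lam := by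
    rintro z ⟨hz, h⟩
    have hmax := hb.eq_max_branchValue hz
    rw [← h, max_self] at hmax
    exact hLam ▸ mem_iUnion.2 ⟨0, z, hTurn ▸ ⟨hz, hmax, hmax.trans h⟩, rfl⟩
  have hcover : Icc (0 : ℝ) 1 ⊆ insert 1 Lam ∪ (Ico 0 1 \ Lam) := by
    intro x hx
    by_cases hxΛ : x ∈ Lam
    · exact Or.inl (mem_insert_of_mem 1 hxΛ)
    rcases hx.2.lt_or_eq with hx1 | rfl
    exacts [Or.inr ⟨⟨hx.1, hx1⟩, hxΛ⟩, Or.inl (mem_insert 1 Lam)]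
  refine ⟨greedyCode lam A b '' Icc 0 1, ?_, ?_, ?_⟩
  · refine (((hfin.insert 1).image _).union ?_).subset
      ((image_mono hcover).trans (image_union ..).subset)
    exact finite_image_diff_of_uIcc_subset ordConnected_Ico hfin
      fun x y => hb.greedyCode_eq_of_uIcc hA hΛ hturn
  · rintro _ ⟨x, -, rfl⟩ k
    exact greedyDigit_lt_two _
  · intro x hx
    exact ⟨_, mem_image_of_mem _ hx, (hb.hasSum_greedyCode hlam0 hlam1 hA hx).tsum_eq.symm⟩

/-- if `Λ = ∪_{n≥0} Tⁿ(𝒯)` is finite, then the graph of `b` is the union of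
finitely many leaves `S(·,a)`. -/
theorem stmt10 (lam : ℝ) (hlam0 : 0 < lam) (hlam1 : lam < 1)
    (A : ℝ → ℝ) (K : NNReal) (hLip : LipschitzWith K A) (hper : Function.Periodic A 1)
    (b : ℝ → ℝ) (hb : IsCalibrated lam 2 A b)
    (Turn : Set ℝ)
    (hTurn : Turn = {x | x ∈ Icc (0:ℝ) 1 ∧
      b x = lam * b (tau 2 0 x) + A (tau 2 0 x) ∧
      b x = lam * b (tau 2 1 x) + A (tau 2 1 x)})
    (Lam : Set ℝ) (hLam : Lam = ⋃ n : ℕ, (Tmap 2)^[n] '' Turn)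
    (hfin : Lam.Finite) :
    ∃ F : Set (ℕ → ℕ), F.Finite ∧ (∀ a ∈ F, ∀ k, a k < 2) ∧
      ∀ x ∈ Icc (0:ℝ) 1, ∃ a ∈ F, b x = Sfun lam 2 A x a :=
  stmt10_general lam hlam0 hlam1 A K hLip b hb Turn hTurn Lam hLam hfin

end
end

section
/- Let 0<λ<1, d=2, and let A:ℝ→ℝ be C¹, 1-periodic, satisfying the twist condition. Let x₀=3/7, so T(x₀)=6/7, T²(x₀)=5/7, T³(x₀)=x₀. Assume S(x₀,(110)^∞)=sup_a S(x₀,a), S(6/7,(011)^∞)=sup_a S(6/7,a), S(5/7,(101)^∞)=sup_a S(5/7,a). Let u∈[3/7,5/7] satisfy S(u,(110)^∞)=S(u,(101)^∞) and v∈[5/7,6/7] satisfy S(v,(101)^∞)=S(v,(011)^∞). Define b:[0,1]→ℝ by b(x)=S(x,(110)^∞) for 0≤x≤u, b(x)=S(x,(101)^∞) for u≤x≤v, b(x)=S(x,(011)^∞) for v≤x≤1. Then b satisfies the calibration equation b(x)=max_{i=0,1}(λ b(τ_i x)+A(τ_i x)) for all x∈[0,1] if and only if τ₁([0,u])⊆[u,v],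 τ₁([u,v])⊆[v,1], and τ₀([v,1])⊆[0,u]. -/
/-!
The recursion `S(x, i w) = A(τ_i x) + λ S(τ_i x, w)` shows that the three sums along the
period-3 orbit are permuted by the branches:
`S(·,(110)^∞) = A ∘ τ₁ + λ S(τ₁ ·,(101)^∞)`,
`S(·,(101)^∞) = A ∘ τ₁ + λ S(τ₁ ·,(011)^∞)`,
`S(·,(011)^∞) = A ∘ τ₀ + λ S(τ₀ ·,(110)^∞)`.
By the twist condition the differences of consecutive sums are strictly monotone, so the
crossing points `u` and `v` are unique, and the first recursion carries the crossing at `u` to a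
crossing at `τ₁ u`; hence `v = τ₁ u`. Both sides of the equivalence then reduce to `u = 1/2`:
the inclusions by looking at the endpoints `τ₁ 0` and `τ₀ 1`; the calibration equation because
for `u ≠ 1/2` it fails at `x = u ± 1/2` (a branch leaving the orbit beats the one following it),
while for `u = 1/2` every `x` has its maximizing branch along the orbit.
-/

open Set

noncomputable section

open Function

theorem Function.Periodic.deriv {𝕜 F : Type*} [NontriviallyNormedField 𝕜]
    [NormedAddCommGroup F] [NormedSpace 𝕜 F] {f : 𝕜 → F} {c : 𝕜} (hf : Periodic f c) :
    Periodic (_root_.deriv f) c := fun x => by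
  rw [← deriv_comp_add_const, show (fun y => f (y + c)) = f from funext hf]

theorem isGreatest_pair_iff {α : Type*} [LinearOrder α] {a b y : α} :
    IsGreatest {a, b} y ↔ y = max a b :=
  ⟨fun h => h.unique isGreatest_pair, fun h => h ▸ isGreatest_pair⟩

theorem setOf_exists_lt_two_eq {α : Type*} (F : ℕ → α) :
    {r | ∃ i < 2, r = F i} = {F 0, F 1} := by
  ext r
  constructor
  · rintro ⟨i, hi, rfl⟩
    interval_cases i <;> simp
  · rintro (rfl | rfl)
    exacts [⟨0, two_pos, rfl⟩, ⟨1, one_lt_two, rfl⟩]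

section Sfun

variable {lam : ℝ} {d : ℕ} {A : ℝ → ℝ}

theorem tpath_cons (i : ℕ) (w : ℕ → ℕ) (x : ℝ) (k : ℕ) :
    tpath d (cons i w) x (k + 1) = tpath d w (tau d i x) k := by
  induction k with
  | zero => rfl
  | succ k ih => exact congrArg (tau d (w (k + 1))) ih

theorem hasDerivAt_tpath (a : ℕ → ℕ) (x : ℝ) (k : ℕ) :
    HasDerivAt (fun y => tpath d a y k) ((d : ℝ)⁻¹ ^ (k + 1)) x := by
  induction k with
  | zero =>
    simpa [tpath, tau, div_eq_mul_inv] using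
      ((hasDerivAt_id x).add_const (a 0 : ℝ)).div_const (d : ℝ)
  | succ k ih =>
    simpa [tpath, tau, pow_succ, div_eq_mul_inv] using
      (ih.add_const (a (k + 1) : ℝ)).div_const (d : ℝ)

theorem summable_Sfun_terms (hlam : |lam| < 1) {M : ℝ} (hM : ∀ y, ‖A y‖ ≤ M)
    (a : ℕ → ℕ) (x : ℝ) : Summable fun k => lam ^ k * A (tpath d a x k) := by
  refine .of_norm_bounded ((summable_geometric_of_lt_one (abs_nonneg lam) hlam).mul_left M)
    fun k => ?_
  rw [norm_mul, norm_pow, Real.norm_eq_abs, mul_comm]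
  exact mul_le_mul_of_nonneg_right (hM _) (by positivity)

theorem Sfun_cons (hlam : |lam| < 1) {M : ℝ} (hM : ∀ y, ‖A y‖ ≤ M) (i : ℕ) (w : ℕ → ℕ)
    (x : ℝ) : Sfun lam d A x (cons i w) = A (tau d i x) + lam * Sfun lam d A (tau d i x) w := by
  rw [Sfun, (summable_Sfun_terms hlam hM _ x).tsum_eq_zero_add, Sfun, ← tsum_mul_left]
  simp only [tpath_cons, pow_succ, pow_zero, one_mul]
  congr 1
  exact tsum_congr fun k => by ring

theorem differentiable_Sfun (hlam : |lam| < 1) (hA : Differentiable ℝ A) {M' : ℝ}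
    (hA' : ∀ y, ‖deriv A y‖ ≤ M') (a : ℕ → ℕ) :
    Differentiable ℝ fun x => Sfun lam d A x a := by
  refine differentiable_tsum'
    ((summable_geometric_of_lt_one (abs_nonneg lam) hlam).mul_left M')
    (fun k y => ((hA _).hasDerivAt.comp y (hasDerivAt_tpath a y k)).const_mul (lam ^ k))
    fun k y => ?_
  have hd : ‖(d : ℝ)⁻¹ ^ (k + 1)‖ ≤ 1 := by
    rw [norm_pow]
    exact pow_le_one₀ (norm_nonneg _) (by simpa using Nat.cast_inv_le_one d)
  rw [norm_mul, norm_mul, norm_pow, Real.norm_eq_abs, mul_comm]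
  exact mul_le_mul_of_nonneg_right ((mul_le_of_le_one_right (norm_nonneg _) hd).trans (hA' _))
    (by positivity)

theorem strictMonoOn_Sfun_sub_of_twist (htwist : Twist lam d A) (hlam : |lam| < 1)
    (hA : Differentiable ℝ A) {M' : ℝ} (hA' : ∀ y, ‖deriv A y‖ ≤ M') {a b : ℕ → ℕ}
    (ha : ∀ k, a k < d) (hb : ∀ k, b k < d) (hab : lexLt a b) :
    StrictMonoOn (fun x => Sfun lam d A x a - Sfun lam d A x b) (Icc 0 1) := by
  have hSa := differentiable_Sfun (d := d) hlam hA hA' a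
  have hSb := differentiable_Sfun (d := d) hlam hA hA' b
  refine strictMonoOn_of_deriv_pos (convex_Icc 0 1) (hSa.sub hSb).continuous.continuousOn
    fun x hx => ?_
  rw [interior_Icc] at hx
  rw [deriv_fun_sub (hSa x) (hSb x)]
  exact htwist a b ha hb hab x hx

end Sfun

theorem tau_two_zero (x : ℝ) : tau 2 0 x = x / 2 := by simp [tau]

theorem tau_two_one (x : ℝ) : tau 2 1 x = (x + 1) / 2 := by norm_num [tau]

theorem isGreatest_calibration_iff (lam : ℝ) (A b : ℝ → ℝ) (x : ℝ) :
    IsGreatest {r | ∃ i < 2, r = lam * b (tau 2 i x) + A (tau 2 i x)} (b x) ↔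
      b x = max (lam * b (x / 2) + A (x / 2)) (lam * b ((x + 1) / 2) + A ((x + 1) / 2)) := by
  rw [setOf_exists_lt_two_eq fun i => lam * b (tau 2 i x) + A (tau 2 i x), isGreatest_pair_iff,
    tau_two_zero, tau_two_one]

theorem image_tau_subset_iff {u : ℝ} (hu : u ∈ Icc (0 : ℝ) 1) :
    (tau 2 1 '' Icc 0 u ⊆ Icc u ((u + 1) / 2) ∧
      tau 2 1 '' Icc u ((u + 1) / 2) ⊆ Icc ((u + 1) / 2) 1 ∧
      tau 2 0 '' Icc ((u + 1) / 2) 1 ⊆ Icc 0 u) ↔ u = 1 / 2 := by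
  constructor
  · rintro ⟨h1, -, h3⟩
    have hl := (h1 (mem_image_of_mem _ (left_mem_Icc.2 hu.1))).1
    have hr := (h3 (mem_image_of_mem _ (right_mem_Icc.2 (by linarith [hu.2])))).2
    rw [tau_two_one] at hl
    rw [tau_two_zero] at hr
    linarith
  · rintro rfl
    refine ⟨?_, ?_, ?_⟩ <;> rintro _ ⟨y, ⟨hy0, hy1⟩, rfl⟩ <;>
      simp only [tau_two_zero, tau_two_one, mem_Icc] <;> constructor <;> linarith

theorem cons_one_seq101 : cons 1 seq101 = seq110 := by
  funext n
  rcases n with _ | n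
  · rfl
  · simp only [cons, seq101, seq110]; split_ifs <;> omega

theorem cons_one_seq011 : cons 1 seq011 = seq101 := by
  funext n
  rcases n with _ | n
  · rfl
  · simp only [cons, seq011, seq101]; split_ifs <;> omega

theorem cons_zero_seq110 : cons 0 seq110 = seq011 := by
  funext n
  rcases n with _ | n
  · rfl
  · simp only [cons, seq110, seq011]; split_ifs <;> omega

theorem seq110_lt_two (k : ℕ) : seq110 k < 2 := by unfold seq110; split_ifs <;> omega

theorem seq101_lt_two (k : ℕ) : seq101 k < 2 := by unfold seq101; split_ifs <;> omega

theorem seq011_lt_two (k : ℕ) : seq011 k < 2 := by unfold seq011; split_ifs <;> omega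

theorem lexLt_seq011_seq101 : lexLt seq011 seq101 := ⟨0, by simp, by decide⟩

theorem lexLt_seq101_seq110 : lexLt seq101 seq110 :=
  ⟨1, fun i hi => by interval_cases i; rfl, by decide⟩

section ThreeCycle

variable {lam u : ℝ} {A f g h b : ℝ → ℝ}

theorem eq_add_one_div_two_of_crossings (hlam : lam ≠ 0)
    (hf : ∀ x, f x = A ((x + 1) / 2) + lam * g ((x + 1) / 2))
    (hg : ∀ x, g x = A ((x + 1) / 2) + lam * h ((x + 1) / 2))
    (hhg : InjOn (fun x => h x - g x) (Icc 0 1)) (hu : u ∈ Icc (-1) 1) {v : ℝ}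
    (hv : v ∈ Icc 0 1) (huS : f u = g u) (hvS : g v = h v) : v = (u + 1) / 2 := by
  have hgh : g ((u + 1) / 2) = h ((u + 1) / 2) := by
    rw [hf u, hg u] at huS
    exact mul_left_cancel₀ hlam (add_left_cancel huS)
  exact hhg hv ⟨by linarith [hu.1], by linarith [hu.2]⟩ (by simp [hvS, hgh])

theorem eq_half_of_calibrated (hlam : 0 < lam)
    (hf : ∀ x, f x = A ((x + 1) / 2) + lam * g ((x + 1) / 2))
    (hh : ∀ x, h x = A (x / 2) + lam * f (x / 2))
    (hgf : StrictMonoOn (fun x => g x - f x) (Icc 0 1)) (hu : u ∈ Ioc 0 1) (huS : f u = g u)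
    (hb : ∀ x, b x = if x ≤ u then f x else if x ≤ (u + 1) / 2 then g x else h x)
    (hcal : ∀ x ∈ Icc (0 : ℝ) 1,
      b x = max (lam * b (x / 2) + A (x / 2)) (lam * b ((x + 1) / 2) + A ((x + 1) / 2))) :
    u = 1 / 2 := by
  obtain ⟨hu0, hu1⟩ := hu
  have hu01 : u ∈ Icc (0 : ℝ) 1 := ⟨hu0.le, hu1⟩
  have hgf_lt : ∀ x ∈ Icc (0 : ℝ) 1, (g x - f x < 0 ↔ x < u) := fun x hx => by
    simpa [huS] using hgf.lt_iff_lt hx hu01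
  have hgf_gt : ∀ x ∈ Icc (0 : ℝ) 1, (0 < g x - f x ↔ u < x) := fun x hx => by
    simpa [huS] using hgf.lt_iff_lt hu01 hx
  by_contra hne
  rcases lt_or_gt_of_ne hne with hlt | hgt
  · have key := (hcal (u + 1 / 2) ⟨by linarith, by linarith⟩).symm ▸ le_max_left _ _
    rw [hb (u + 1 / 2), if_neg (by linarith), if_neg (by linarith), hh, hb ((u + 1 / 2) / 2),
      if_neg (by linarith), if_pos (by linarith)] at key
    have := (hgf_gt ((u + 1 / 2) / 2) ⟨by linarith, by linarith⟩).2 (by linarith)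
    nlinarith
  · have key := (hcal (u - 1 / 2) ⟨by linarith, by linarith⟩).symm ▸ le_max_right _ _
    rw [hb (u - 1 / 2), if_pos (by linarith), hf, hb ((u - 1 / 2 + 1) / 2),
      if_pos (by linarith)] at key
    have := (hgf_lt ((u - 1 / 2 + 1) / 2) ⟨by linarith, by linarith⟩).2 (by linarith)
    nlinarith

theorem calibrated_of_eq_half
    (hf : ∀ x, f x = A ((x + 1) / 2) + lam * g ((x + 1) / 2))
    (hg : ∀ x, g x = A ((x + 1) / 2) + lam * h ((x + 1) / 2))
    (hh : ∀ x, h x = A (x / 2) + lam * f (x / 2))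
    (hgf : StrictMonoOn (fun x => g x - f x) (Icc 0 1))
    (hhg : StrictMonoOn (fun x => h x - g x) (Icc 0 1)) (hu : u = 1 / 2) (huS : f u = g u)
    (hvS : g ((u + 1) / 2) = h ((u + 1) / 2))
    (hb : ∀ x, b x = if x ≤ u then f x else if x ≤ (u + 1) / 2 then g x else h x) :
    ∀ x ∈ Icc (0 : ℝ) 1,
      b x = max (lam * b (x / 2) + A (x / 2)) (lam * b ((x + 1) / 2) + A ((x + 1) / 2)) := by
  subst hu
  have hu01 : (1 / 2 : ℝ) ∈ Icc 0 1 := ⟨by norm_num, by norm_num⟩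
  have hv01 : ((1 / 2 + 1) / 2 : ℝ) ∈ Icc 0 1 := ⟨by norm_num, by norm_num⟩
  rintro x hx
  have hgf_le := hgf.le_iff_le hx hu01
  have hhg_le := hhg.le_iff_le hx hv01
  have hhg_ge := hhg.le_iff_le hv01 hx
  simp only [huS, hvS, sub_self] at hgf_le hhg_le hhg_ge
  have c0 : lam * b (x / 2) + A (x / 2) = h x := by
    rw [hb, if_pos (by linarith [hx.2]), hh]; ring
  have hb_mid : ∀ y, 1 / 2 ≤ y → y ≤ (1 / 2 + 1) / 2 → b y = g y := fun y hy hy' => by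
    rw [hb]
    split_ifs with hyu
    · rw [le_antisymm hyu hy, huS]
    · rfl
  rw [c0]
  rcases le_or_gt x (1 / 2) with hxu | hxu
  · have c1 : lam * b ((x + 1) / 2) + A ((x + 1) / 2) = f x := by
      rw [hb_mid _ (by linarith [hx.1]) (by linarith [hx.2]), hf]; ring
    rw [c1, hb, if_pos hxu]
    exact (max_eq_right (by linarith [hgf_le.2 hxu, hhg_le.2 (by linarith)])).symm
  · have c1 : lam * b ((x + 1) / 2) + A ((x + 1) / 2) = g x := by
      rw [hb ((x + 1) / 2), if_neg (by linarith), if_neg (by linarith), hg]; ring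
    rw [c1, hb, if_neg (by linarith)]
    split_ifs with hxv
    · exact (max_eq_right (by linarith [hhg_le.2 hxv])).symm
    · exact (max_eq_left (by linarith [hhg_ge.2 (by linarith)])).symm

end ThreeCycle

theorem stmt13_general (lam : ℝ) (hlam0 : 0 < lam) (hlam1 : lam < 1)
    (A : ℝ → ℝ) (hA : ContDiff ℝ 1 A) (hper : Function.Periodic A 1)
    (htwist : Twist lam 2 A)
    (u : ℝ) (hu : u ∈ Icc (3/7 : ℝ) (5/7))
    (huS : Sfun lam 2 A u seq110 = Sfun lam 2 A u seq101)
    (v : ℝ) (hv : v ∈ Icc (5/7 : ℝ) (6/7))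
    (hvS : Sfun lam 2 A v seq101 = Sfun lam 2 A v seq011)
    (b : ℝ → ℝ)
    (hbdef : ∀ x : ℝ, b x = if x ≤ u then Sfun lam 2 A x seq110
      else if x ≤ v then Sfun lam 2 A x seq101 else Sfun lam 2 A x seq011) :
    (∀ x ∈ Icc (0:ℝ) 1,
        IsGreatest {r : ℝ | ∃ i < 2, r = lam * b (tau 2 i x) + A (tau 2 i x)} (b x)) ↔
      (tau 2 1 '' Icc 0 u ⊆ Icc u v ∧ tau 2 1 '' Icc u v ⊆ Icc v 1 ∧
        tau 2 0 '' Icc v 1 ⊆ Icc 0 u) := by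
  have hlam : |lam| < 1 := abs_lt.2 ⟨by linarith, hlam1⟩
  obtain ⟨M, hM⟩ := isBounded_iff_forall_norm_le.1
    (hper.isBounded_of_continuous one_ne_zero hA.continuous)
  obtain ⟨M', hM'⟩ := isBounded_iff_forall_norm_le.1
    (hper.deriv.isBounded_of_continuous one_ne_zero (hA.continuous_deriv le_rfl))
  have hS := Sfun_cons (d := 2) hlam fun y => hM _ (mem_range_self y)
  have hf (x : ℝ) : Sfun lam 2 A x seq110 =
      A ((x + 1) / 2) + lam * Sfun lam 2 A ((x + 1) / 2) seq101 := by
    rw [← cons_one_seq101, hS, tau_two_one]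
  have hg (x : ℝ) : Sfun lam 2 A x seq101 =
      A ((x + 1) / 2) + lam * Sfun lam 2 A ((x + 1) / 2) seq011 := by
    rw [← cons_one_seq011, hS, tau_two_one]
  have hh (x : ℝ) : Sfun lam 2 A x seq011 =
      A (x / 2) + lam * Sfun lam 2 A (x / 2) seq110 := by
    rw [← cons_zero_seq110, hS, tau_two_zero]
  have hAd : Differentiable ℝ A := hA.differentiable one_ne_zero
  have hA' (y : ℝ) : ‖deriv A y‖ ≤ M' := hM' _ (mem_range_self y)
  have hgf := strictMonoOn_Sfun_sub_of_twist htwist hlam hAd hA' seq101_lt_two seq110_lt_two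
    lexLt_seq101_seq110
  have hhg := strictMonoOn_Sfun_sub_of_twist htwist hlam hAd hA' seq011_lt_two seq101_lt_two
    lexLt_seq011_seq101
  obtain rfl : v = (u + 1) / 2 := eq_add_one_div_two_of_crossings hlam0.ne' hf hg hhg.injOn
    ⟨by linarith [hu.1], by linarith [hu.2]⟩ ⟨by linarith [hv.1], by linarith [hv.2]⟩ huS hvS
  have hu' : u ∈ Ioc (0 : ℝ) 1 := ⟨by linarith [hu.1], by linarith [hu.2]⟩
  simp only [isGreatest_calibration_iff]
  rw [image_tau_subset_iff (Ioc_subset_Icc_self hu')]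
  exact ⟨eq_half_of_calibrated hlam0 hf hh hgf hu' huS hbdef,
    fun hu_half => calibrated_of_eq_half hf hg hh hgf hhg hu_half huS hvS hbdef⟩

/-- period-3 characterization. The piecewise function built from
`S(·,(110)^∞)`, `S(·,(101)^∞)`, `S(·,(011)^∞)` on `[0,u]`, `[u,v]`, `[v,1]` satisfies the
calibration equation iff `τ₁([0,u]) ⊆ [u,v]`, `τ₁([u,v]) ⊆ [v,1]` and `τ₀([v,1]) ⊆ [0,u]`. -/
theorem stmt13 (lam : ℝ) (hlam0 : 0 < lam) (hlam1 : lam < 1)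
    (A : ℝ → ℝ) (hA : ContDiff ℝ 1 A) (hper : Function.Periodic A 1)
    (htwist : Twist lam 2 A)
    (h110 : IsGreatest {r : ℝ | ∃ a : ℕ → ℕ, (∀ k, a k < 2) ∧ r = Sfun lam 2 A (3/7) a}
      (Sfun lam 2 A (3/7) seq110))
    (h011 : IsGreatest {r : ℝ | ∃ a : ℕ → ℕ, (∀ k, a k < 2) ∧ r = Sfun lam 2 A (6/7) a}
      (Sfun lam 2 A (6/7) seq011))
    (h101 : IsGreatest {r : ℝ | ∃ a : ℕ → ℕ, (∀ k, a k < 2) ∧ r = Sfun lam 2 A (5/7) a}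
      (Sfun lam 2 A (5/7) seq101))
    (u : ℝ) (hu : u ∈ Icc (3/7 : ℝ) (5/7))
    (huS : Sfun lam 2 A u seq110 = Sfun lam 2 A u seq101)
    (v : ℝ) (hv : v ∈ Icc (5/7 : ℝ) (6/7))
    (hvS : Sfun lam 2 A v seq101 = Sfun lam 2 A v seq011)
    (b : ℝ → ℝ)
    (hbdef : ∀ x : ℝ, b x = if x ≤ u then Sfun lam 2 A x seq110
      else if x ≤ v then Sfun lam 2 A x seq101 else Sfun lam 2 A x seq011) :
    (∀ x ∈ Icc (0:ℝ) 1,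
        IsGreatest {r : ℝ | ∃ i < 2, r = lam * b (tau 2 i x) + A (tau 2 i x)} (b x)) ↔
      (tau 2 1 '' Icc 0 u ⊆ Icc u v ∧ tau 2 1 '' Icc u v ⊆ Icc v 1 ∧
        tau 2 0 '' Icc v 1 ⊆ Icc 0 u) :=
  stmt13_general lam hlam0 hlam1 A hA hper htwist u hu huS v hv hvS b hbdef
end
end
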